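/- arXiv:1610.03583 — 2 statements merged into one kernel-verified Lean document; each statement's English description precedes it below -/
import Mathlib

section
/- Let β = e_1 e_2 ⋯ e_{p+q} be the unit pseudoscalar of Cl_{p,q}. The center of the Salingaros vee group G_{p,q} is: {±1} ≅ ℤ_2 if p − q ≡ 0, 2, 4, or 6 (mod 8); {±1, ±β} ≅ ℤ_2 × ℤ_2 if p − q ≡ 1 or 5 (mod 8); and {±1, ±β} ≅ ℤ_4 if p − q ≡ 3 or 7 (mod 8). -/
noncomputable section

/-- The quadratic form of signature `(p,q)` on `ℝ^(p+q)`. -/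
def Qpq (p q : ℕ) : QuadraticForm ℝ (Fin (p + q) → ℝ) :=
  QuadraticMap.weightedSumSquares ℝ (fun i : Fin (p + q) => if (i : ℕ) < p then (1 : ℝ) else -1)

/-- The real Clifford algebra `Cl_{p,q}`. -/
abbrev Cl (p q : ℕ) : Type := CliffordAlgebra (Qpq p q)

/-- The generators `e i` of `Cl_{p,q}`. -/
def gen (p q : ℕ) (i : Fin (p + q)) : Cl p q :=
  CliffordAlgebra.ι (Qpq p q) (Pi.single i 1)

/-- The Salingaros vee group `G_{p,q}`: the subgroup of the group of units of `Cl_{p,q}`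
generated by `-1` and the generators `e i`. -/
def VeeGroup (p q : ℕ) : Subgroup (Cl p q)ˣ :=
  Subgroup.closure
    {u : (Cl p q)ˣ | (u : Cl p q) = -1 ∨ ∃ i : Fin (p + q), (u : Cl p q) = gen p q i}

/-- The unit pseudoscalar `β = e₁e₂⋯e_n` of `Cl_{p,q}`. -/
def pseudoScalar (p q : ℕ) : Cl p q := (List.ofFn (gen p q)).prod

/-!
Every element of `G_{p,q}` is `±e_S` for a list `S` of distinct indices, and
`e_i e_S = (-1)^(|S| + [i ∈ S]) e_S e_i`. Hence `e_S` is central exactly when `S = ∅`, or `S`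
contains every index and `n = p + q` is odd; so the center is `{±1}` or `{±1, ±β}`. In the odd
case `β² = (-1)^(C(n,2) + q)`, which is `1` iff `p - q ≡ 0, 1 (mod 4)`: the center is then a
Klein four-group, and otherwise cyclic of order four, generated by `β`.
-/

open CliffordAlgebra

namespace QuadraticMap

variable {R ι : Type*} [CommRing R] [Fintype ι] [DecidableEq ι] (w : ι → R)

theorem weightedSumSquares_single (i : ι) :
    weightedSumSquares R w (Pi.single i 1) = w i := by
  simp [weightedSumSquares_apply, Pi.single_apply]

theorem polar_weightedSumSquares_single {i j : ι} (h : i ≠ j) :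
    polar (weightedSumSquares R w) (Pi.single i 1) (Pi.single j 1) = 0 := by
  simp only [polar, weightedSumSquares_apply, ← Finset.sum_sub_distrib]
  refine Finset.sum_eq_zero fun k _ => ?_
  by_cases hki : k = i <;> by_cases hkj : k = j <;> simp_all

end QuadraticMap

theorem ne_neg_self_of_ne_zero (K : Type*) {M : Type*} [DivisionRing K] [CharZero K]
    [AddCommGroup M] [Module K M] {x : M} (hx : x ≠ 0) : x ≠ -x := by
  intro h
  have h2 : (2 : K) • x = 0 := by rw [two_smul]; nth_rw 2 [h]; exact add_neg_cancel x
  exact hx ((smul_eq_zero.mp h2).resolve_left two_ne_zero)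

theorem Nat.even_choose_two_iff (n : ℕ) : Even (n.choose 2) ↔ n % 4 = 0 ∨ n % 4 = 1 := by
  induction n with
  | zero => simp
  | succ n ih =>
    rw [Nat.choose_succ_succ', Nat.choose_one_right, Nat.even_add, ih, Nat.even_iff]
    omega

theorem List.Nodup.eq_nil_or_perm_finRange_of_forall_even {n : ℕ} {l : List (Fin n)}
    (hl : l.Nodup) (h : ∀ i, Even (l.length + l.count i)) :
    l = [] ∨ (l.Perm (List.finRange n) ∧ Odd n) := by
  by_cases hne : l = []
  · exact Or.inl hne
  obtain ⟨a, ha⟩ := List.exists_mem_of_ne_nil l hne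
  have hodd : Odd l.length := by
    simpa [List.count_eq_one_of_mem hl ha, Nat.even_add_one] using h a
  have hmem : ∀ i, i ∈ l := fun i => by
    by_contra hi
    simpa [List.count_eq_zero_of_not_mem hi, Nat.not_even_iff_odd.mpr hodd] using h i
  have hperm : l.Perm (List.finRange n) :=
    (List.perm_ext_iff_of_nodup hl (List.nodup_finRange n)).mpr (by simp [hmem])
  exact Or.inr ⟨hperm, by rwa [hperm.length_eq, List.length_finRange] at hodd⟩

namespace Cl

variable {p q : ℕ}

theorem gen_mul_self (i : Fin (p + q)) :
    gen p q i * gen p q i = if (i : ℕ) < p then 1 else -1 := by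
  have hQ : Qpq p q (Pi.single i 1) = if (i : ℕ) < p then 1 else -1 :=
    QuadraticMap.weightedSumSquares_single _ i
  rw [gen, ι_sq_scalar, hQ]
  split_ifs <;> simp

theorem gen_mul_gen_of_ne {i j : Fin (p + q)} (h : i ≠ j) :
    gen p q i * gen p q j = -(gen p q j * gen p q i) := by
  have hpolar : QuadraticMap.polar (Qpq p q) (Pi.single i 1) (Pi.single j 1) = 0 :=
    QuadraticMap.polar_weightedSumSquares_single _ h
  have := ι_mul_ι_add_swap (Q := Qpq p q) (Pi.single i 1) (Pi.single j 1)
  rw [hpolar, map_zero] at this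
  exact eq_neg_of_add_eq_zero_left this

theorem isUnit_gen (i : Fin (p + q)) : IsUnit (gen p q i) := by
  rw [← isUnit_mul_self_iff, gen_mul_self]
  split_ifs
  exacts [isUnit_one, isUnit_one.neg]

variable (p q) in
def genProd (l : List (Fin (p + q))) : Cl p q := (l.map (gen p q)).prod

@[simp] theorem genProd_nil : genProd p q [] = 1 := rfl

@[simp] theorem genProd_cons (i : Fin (p + q)) (l : List (Fin (p + q))) :
    genProd p q (i :: l) = gen p q i * genProd p q l := List.prod_cons

@[simp] theorem genProd_append (l l' : List (Fin (p + q))) :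
    genProd p q (l ++ l') = genProd p q l * genProd p q l' := by
  simp [genProd]

theorem pseudoScalar_eq_genProd : pseudoScalar p q = genProd p q (List.finRange (p + q)) := by
  rw [pseudoScalar, genProd, List.ofFn_eq_map]

theorem isUnit_genProd (l : List (Fin (p + q))) : IsUnit (genProd p q l) :=
  List.prod_isUnit (by simpa using fun i _ => isUnit_gen i)

theorem involute_genProd (l : List (Fin (p + q))) :
    involute (genProd p q l) = (-1 : ℝ) ^ l.length • genProd p q l := by
  induction l with
  | nil => simp
  | cons i l ih => simp [ih, gen, pow_succ]

theorem gen_mul_genProd (i : Fin (p + q)) (l : List (Fin (p + q))) :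
    gen p q i * genProd p q l =
      (-1 : ℝ) ^ (l.length + l.count i) • (genProd p q l * gen p q i) := by
  induction l with
  | nil => simp
  | cons j l ih =>
    rcases eq_or_ne i j with rfl | hij
    · calc gen p q i * (gen p q i * genProd p q l)
          = (-1 : ℝ) ^ (l.length + l.count i) • (gen p q i * (genProd p q l * gen p q i)) := by
            rw [ih, mul_smul_comm]
        _ = _ := by
            rw [genProd_cons, mul_assoc, List.length_cons, List.count_cons_self]; ring_nf
    · calc gen p q i * (gen p q j * genProd p q l)
          = -((-1 : ℝ) ^ (l.length + l.count i) • (gen p q j * genProd p q l * gen p q i)) := by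
            rw [← mul_assoc, gen_mul_gen_of_ne hij, neg_mul, mul_assoc, ih, mul_smul_comm,
              mul_assoc]
        _ = _ := by
            rw [genProd_cons, List.length_cons, List.count_cons_of_ne hij.symm, ← neg_smul]
            ring_nf

theorem genProd_mul_gen (i : Fin (p + q)) (l : List (Fin (p + q))) :
    genProd p q l * gen p q i =
      (-1 : ℝ) ^ (l.length + l.count i) • (gen p q i * genProd p q l) := by
  rw [gen_mul_genProd, smul_smul, ← mul_pow, neg_one_mul, neg_neg, one_pow, one_smul]

theorem commute_gen_genProd_iff (i : Fin (p + q)) (l : List (Fin (p + q))) :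
    Commute (gen p q i) (genProd p q l) ↔ Even (l.length + l.count i) := by
  have hne : genProd p q l * gen p q i ≠ 0 := ((isUnit_genProd l).mul (isUnit_gen i)).ne_zero
  rw [commute_iff_eq, gen_mul_genProd, ← neg_one_pow_eq_one_iff_even (R := ℝ) (by norm_num)]
  nth_rw 2 [← one_smul ℝ (genProd p q l * gen p q i)]
  exact (smul_left_injective ℝ hne).eq_iff

theorem genProd_perm {l l' : List (Fin (p + q))} (h : l.Perm l') :
    ∃ c : ℝ, |c| = 1 ∧ genProd p q l = c • genProd p q l' := by
  induction h with
  | nil => exact ⟨1, by simp⟩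
  | cons i _ ih =>
    obtain ⟨c, hc, h⟩ := ih
    exact ⟨c, hc, by rw [genProd_cons, genProd_cons, h, mul_smul_comm]⟩
  | swap i j l =>
    rcases eq_or_ne j i with rfl | hji
    · exact ⟨1, by simp⟩
    · refine ⟨-1, by simp, ?_⟩
      simp only [genProd_cons, ← mul_assoc, gen_mul_gen_of_ne hji, neg_mul, neg_smul, one_smul]
  | trans _ _ ih ih' =>
    obtain ⟨c, hc, h⟩ := ih
    obtain ⟨c', hc', h'⟩ := ih'
    exact ⟨c * c', by rw [abs_mul, hc, hc', one_mul], by rw [h, h', smul_smul]⟩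

theorem genProd_mul_self {l : List (Fin (p + q))} (hl : l.Nodup) :
    genProd p q l * genProd p q l =
      (-1 : ℝ) ^ l.length.choose 2 • (l.map fun i => gen p q i * gen p q i).prod := by
  induction l with
  | nil => simp
  | cons i l ih =>
    obtain ⟨hil, hl⟩ := List.nodup_cons.mp hl
    calc gen p q i * genProd p q l * (gen p q i * genProd p q l)
        = (-1 : ℝ) ^ l.length • (gen p q i * gen p q i * (genProd p q l * genProd p q l)) := by
          rw [mul_assoc, ← mul_assoc (genProd p q l), genProd_mul_gen,
            List.count_eq_zero_of_not_mem hil, add_zero, smul_mul_assoc, mul_smul_comm]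
          simp only [mul_assoc]
      _ = _ := by
          rw [ih hl, mul_smul_comm, smul_smul, ← pow_add, List.length_cons, Nat.choose_succ_succ',
            Nat.choose_one_right, List.map_cons, List.prod_cons]

theorem pseudoScalar_mul_self :
    pseudoScalar p q * pseudoScalar p q =
      if ((p : ℤ) - q) % 4 = 0 ∨ ((p : ℤ) - q) % 4 = 1 then 1 else -1 := by
  have hprod : ((List.finRange (p + q)).map fun i => gen p q i * gen p q i).prod =
      (-1 : Cl p q) ^ q := by
    simp [← List.ofFn_eq_map, List.ofFn_add, gen_mul_self]
  have hparity :
      Even ((p + q).choose 2 + q) ↔ ((p : ℤ) - q) % 4 = 0 ∨ ((p : ℤ) - q) % 4 = 1 := by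
    rw [Nat.even_add, Nat.even_choose_two_iff, Nat.even_iff]
    omega
  rw [pseudoScalar_eq_genProd, genProd_mul_self (List.nodup_finRange _), hprod,
    List.length_finRange, Algebra.smul_def, map_pow, map_neg, map_one, ← pow_add]
  split_ifs with h
  · exact (hparity.2 h).neg_one_pow
  · exact (Nat.not_even_iff_odd.1 (hparity.not.2 h)).neg_one_pow

theorem pseudoScalar_ne_neg_self : pseudoScalar p q ≠ -pseudoScalar p q :=
  ne_neg_self_of_ne_zero ℝ (pseudoScalar_eq_genProd (p := p) ▸ (isUnit_genProd _).ne_zero)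

theorem involute_pseudoScalar (hn : Odd (p + q)) :
    involute (pseudoScalar p q) = -pseudoScalar p q := by
  rw [pseudoScalar_eq_genProd, involute_genProd, List.length_finRange, hn.neg_one_pow, neg_one_smul]

theorem pseudoScalar_ne_one (hn : Odd (p + q)) : pseudoScalar p q ≠ 1 := fun h =>
  pseudoScalar_ne_neg_self (by rw [← involute_pseudoScalar hn, h, map_one])

theorem pseudoScalar_ne_neg_one (hn : Odd (p + q)) : pseudoScalar p q ≠ -1 := fun h =>
  pseudoScalar_ne_neg_self (by rw [← involute_pseudoScalar hn, h, map_neg, map_one])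

theorem commute_gen_pseudoScalar (hn : Odd (p + q)) (i : Fin (p + q)) :
    Commute (gen p q i) (pseudoScalar p q) := by
  rw [pseudoScalar_eq_genProd, commute_gen_genProd_iff, List.length_finRange,
    List.count_eq_one_of_mem (List.nodup_finRange _) (List.mem_finRange i)]
  exact hn.add_one

theorem exists_gen_mul_self_eq_smul_one (i : Fin (p + q)) :
    ∃ w : ℝ, |w| = 1 ∧ gen p q i * gen p q i = w • 1 :=
  ⟨if (i : ℕ) < p then 1 else -1, by split_ifs <;> simp,
    by rw [gen_mul_self]; split_ifs <;> simp⟩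

variable (p q) in
def IsSignedMonomial (x : Cl p q) : Prop :=
  ∃ c : ℝ, |c| = 1 ∧ ∃ l : List (Fin (p + q)), l.Nodup ∧ x = c • genProd p q l

theorem IsSignedMonomial.smul {x : Cl p q} (hx : IsSignedMonomial p q x) {c : ℝ} (hc : |c| = 1) :
    IsSignedMonomial p q (c • x) := by
  obtain ⟨c', hc', l, hl, rfl⟩ := hx
  exact ⟨c * c', by rw [abs_mul, hc, hc', one_mul], l, hl, smul_smul c c' _⟩

theorem isSignedMonomial_genProd_mul_gen {l : List (Fin (p + q))} (hl : l.Nodup)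
    (i : Fin (p + q)) : IsSignedMonomial p q (genProd p q l * gen p q i) := by
  by_cases hi : i ∈ l
  · obtain ⟨s, t, rfl⟩ := List.append_of_mem hi
    have hit : i ∉ t := (List.nodup_cons.mp (List.nodup_append.mp hl).2.1).1
    obtain ⟨w, hw, hii⟩ := exists_gen_mul_self_eq_smul_one i
    refine ⟨(-1) ^ t.length * w, by simp [hw], s ++ t,
      hl.sublist ((List.sublist_cons_self i t).append_left s), ?_⟩
    rw [genProd_append, genProd_cons, mul_assoc, mul_assoc, genProd_mul_gen,
      List.count_eq_zero_of_not_mem hit, add_zero, mul_smul_comm, mul_smul_comm, ← mul_assoc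
      (gen p q i), hii, genProd_append, smul_mul_assoc, one_mul, mul_smul_comm, smul_smul]
  · refine ⟨1, abs_one, l ++ [i],
      List.nodup_append.mpr ⟨hl, List.nodup_singleton i, ?_⟩, ?_⟩
    · simp only [List.mem_singleton]
      rintro a ha b rfl rfl
      exact hi ha
    · simp [genProd]

theorem IsSignedMonomial.mul_gen {x : Cl p q} (hx : IsSignedMonomial p q x) (i : Fin (p + q)) :
    IsSignedMonomial p q (x * gen p q i) := by
  obtain ⟨c, hc, l, hl, rfl⟩ := hx
  rw [smul_mul_assoc]
  exact (isSignedMonomial_genProd_mul_gen hl i).smul hc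

end Cl

namespace VeeGroup

open Cl

variable {p q : ℕ}

theorem neg_one_mem : (-1 : (Cl p q)ˣ) ∈ VeeGroup p q :=
  Subgroup.subset_closure (Or.inl rfl)

theorem gen_unit_mem (i : Fin (p + q)) : (isUnit_gen i).unit ∈ VeeGroup p q :=
  Subgroup.subset_closure (Or.inr ⟨i, rfl⟩)

theorem exists_mem_val_eq_genProd (l : List (Fin (p + q))) :
    ∃ u ∈ VeeGroup p q, (u : Cl p q) = genProd p q l := by
  induction l with
  | nil => exact ⟨1, one_mem _, rfl⟩
  | cons i l ih =>
    obtain ⟨u, hu, hul⟩ := ih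
    exact ⟨(isUnit_gen i).unit * u, mul_mem (gen_unit_mem i) hu, by simp [hul]⟩

theorem isSignedMonomial_of_mem {u : (Cl p q)ˣ} (hu : u ∈ VeeGroup p q) :
    IsSignedMonomial p q u := by
  induction hu using Subgroup.closure_induction_right with
  | one => exact ⟨1, abs_one, [], List.nodup_nil, by simp⟩
  | mul_right x _ y hy hx =>
    rcases hy with hy | ⟨i, hy⟩
    · simpa [hy] using hx.smul (c := -1) (by simp)
    · simpa [hy] using hx.mul_gen i
  | mul_inv_cancel x _ y hy hx =>
    rcases hy with hy | ⟨i, hy⟩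
    · have : y = -1 := Units.ext hy
      simpa [this] using hx.smul (c := -1) (by simp)
    · obtain ⟨w, hw, hii⟩ := exists_gen_mul_self_eq_smul_one i
      have hinv : ((y⁻¹ : (Cl p q)ˣ) : Cl p q) = w • gen p q i := by
        refine Units.inv_eq_of_mul_eq_one_right ?_
        rw [hy, mul_smul_comm, hii, smul_smul, ← abs_mul_abs_self, hw, one_mul, one_smul]
      rw [Units.val_mul, hinv, mul_smul_comm]
      exact (hx.mul_gen i).smul hw

theorem mem_center_iff_forall_commute_gen {x : VeeGroup p q} :
    x ∈ Subgroup.center (VeeGroup p q) ↔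
      ∀ i, Commute (gen p q i) ((x : (Cl p q)ˣ) : Cl p q) := by
  rw [Subgroup.mem_center_iff]
  constructor
  · intro h i
    have := congrArg (fun g : VeeGroup p q => ((g : (Cl p q)ˣ) : Cl p q))
      (h ⟨(isUnit_gen i).unit, gen_unit_mem i⟩)
    simpa [commute_iff_eq] using this
  · intro h g
    have hx : (x : (Cl p q)ˣ) ∈ Subgroup.centralizer (VeeGroup p q) := by
      unfold VeeGroup
      rw [Subgroup.centralizer_closure, Subgroup.mem_centralizer_iff]
      rintro u (hu | ⟨i, hu⟩) <;> ext
      · simp [hu]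
      · simpa [hu] using (h i).eq
    exact Subtype.ext (Subgroup.mem_centralizer_iff.mp hx g g.2)

theorem mem_center_iff (x : VeeGroup p q) :
    x ∈ Subgroup.center (VeeGroup p q) ↔
      ((x : (Cl p q)ˣ) : Cl p q) = 1 ∨ ((x : (Cl p q)ˣ) : Cl p q) = -1 ∨
        (Odd (p + q) ∧ (((x : (Cl p q)ˣ) : Cl p q) = pseudoScalar p q ∨
          ((x : (Cl p q)ˣ) : Cl p q) = -pseudoScalar p q)) := by
  rw [mem_center_iff_forall_commute_gen]
  constructor
  · obtain ⟨c, hc, l, hl, hx⟩ := isSignedMonomial_of_mem x.2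
    have hc' : c = 1 ∨ c = -1 := abs_eq zero_le_one |>.mp hc
    rw [hx]
    intro h
    simp_rw [Commute.smul_right_iff₀ (abs_pos.mp (hc ▸ one_pos)), commute_gen_genProd_iff] at h
    rcases hl.eq_nil_or_perm_finRange_of_forall_even h with rfl | ⟨hperm, hn⟩
    · rcases hc' with rfl | rfl <;> simp
    · obtain ⟨c', hc'', h'⟩ := genProd_perm hperm
      rw [h', ← pseudoScalar_eq_genProd, smul_smul]
      have : c * c' = 1 ∨ c * c' = -1 :=
        abs_eq zero_le_one |>.mp (by rw [abs_mul, hc, hc'', one_mul])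
      rcases this with h | h <;> simp [h, hn]
  · rintro (h | h | ⟨hn, h | h⟩) i <;> rw [h]
    · exact Commute.one_right _
    · exact (Commute.one_right _).neg_right
    · exact commute_gen_pseudoScalar hn i
    · exact (commute_gen_pseudoScalar hn i).neg_right

variable (p q) in
def centerVal : Subgroup.center (VeeGroup p q) →* Cl p q :=
  (Units.coeHom (Cl p q)).comp ((VeeGroup p q).subtype.comp (Subgroup.center _).subtype)

theorem centerVal_injective : Function.Injective (centerVal p q) :=
  fun _ _ h => Subtype.ext (Subtype.ext (Units.ext h))

theorem range_centerVal : Set.range (centerVal p q) =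
    {x | x = 1 ∨ x = -1 ∨
      (Odd (p + q) ∧ (x = pseudoScalar p q ∨ x = -pseudoScalar p q))} := by
  ext x
  constructor
  · rintro ⟨z, rfl⟩
    exact (mem_center_iff (z : VeeGroup p q)).mp z.2
  · intro hx
    obtain ⟨u, hu, rfl⟩ : ∃ u ∈ VeeGroup p q, (u : Cl p q) = x := by
      obtain ⟨b, hb, hbβ⟩ := exists_mem_val_eq_genProd (List.finRange (p + q))
      rw [← pseudoScalar_eq_genProd] at hbβ
      rcases hx with rfl | rfl | ⟨-, rfl | rfl⟩
      · exact ⟨1, one_mem _, rfl⟩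
      · exact ⟨-1, neg_one_mem, rfl⟩
      · exact ⟨b, hb, hbβ⟩
      · exact ⟨-b, by simpa using mul_mem neg_one_mem hb, by simp [hbβ]⟩
    exact ⟨⟨⟨u, hu⟩, (mem_center_iff _).mpr hx⟩, rfl⟩

theorem range_centerVal_of_even (hn : Even (p + q)) :
    Set.range (centerVal p q) = {1, -1} := by
  ext x
  simp [range_centerVal, ← Nat.not_even_iff_odd, hn]

theorem range_centerVal_of_odd (hn : Odd (p + q)) :
    Set.range (centerVal p q) = {1, -1, pseudoScalar p q, -pseudoScalar p q} := by
  ext x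
  simp [range_centerVal, hn]

theorem card_center_of_even (hn : Even (p + q)) :
    Nat.card (Subgroup.center (VeeGroup p q)) = 2 := by
  rw [← Nat.card_range_of_injective centerVal_injective, range_centerVal_of_even hn,
    Nat.card_coe_set_eq, Set.ncard_pair (ne_neg_self_of_ne_zero ℝ one_ne_zero)]

theorem card_center_of_odd (hn : Odd (p + q)) :
    Nat.card (Subgroup.center (VeeGroup p q)) = 4 := by
  have h1 : (1 : Cl p q) ≠ -1 := ne_neg_self_of_ne_zero ℝ one_ne_zero
  have hβ1 := pseudoScalar_ne_one hn
  have hβ2 := pseudoScalar_ne_neg_one hn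
  rw [← Nat.card_range_of_injective centerVal_injective, range_centerVal_of_odd hn,
    Nat.card_coe_set_eq, Set.ncard_insert_of_notMem, Set.ncard_insert_of_notMem,
    Set.ncard_pair pseudoScalar_ne_neg_self]
  · simp only [Set.mem_insert_iff, Set.mem_singleton_iff, not_or]
    exact ⟨fun h => hβ2 h.symm, fun h => hβ1 (neg_inj.mp h).symm⟩
  · simp only [Set.mem_insert_iff, Set.mem_singleton_iff, not_or]
    exact ⟨h1, fun h => hβ1 h.symm, fun h => hβ2 (by rw [← neg_neg (pseudoScalar p q), ← h])⟩

theorem isKleinFour_center (h : ((p : ℤ) - q) % 4 = 1) :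
    IsKleinFour (Subgroup.center (VeeGroup p q)) := by
  have hn : Odd (p + q) := Nat.odd_iff.mpr (by omega)
  have hcard := card_center_of_odd (p := p) (q := q) hn
  have : Finite (Subgroup.center (VeeGroup p q)) := Nat.finite_of_card_ne_zero (by omega)
  have : Nontrivial (Subgroup.center (VeeGroup p q)) :=
    Finite.one_lt_card_iff_nontrivial.mp (by omega)
  have hββ : pseudoScalar p q * pseudoScalar p q = 1 := by
    rw [pseudoScalar_mul_self, if_pos (Or.inr h)]
  refine ⟨hcard, (Monoid.exponent_eq_prime_iff Nat.prime_two).mpr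
    fun z hz => orderOf_eq_prime ?_ hz⟩
  apply centerVal_injective
  have hz : centerVal p q z ∈ Set.range (centerVal p q) := ⟨z, rfl⟩
  rw [range_centerVal_of_odd hn, Set.mem_insert_iff, Set.mem_insert_iff, Set.mem_insert_iff,
    Set.mem_singleton_iff] at hz
  rw [map_pow, map_one, pow_two]
  rcases hz with hz | hz | hz | hz <;> simp [hz, hββ]

theorem isCyclic_center (h : ((p : ℤ) - q) % 4 = 3) :
    IsCyclic (Subgroup.center (VeeGroup p q)) := by
  have hn : Odd (p + q) := Nat.odd_iff.mpr (by omega)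
  have hcard := card_center_of_odd (p := p) (q := q) hn
  have : Finite (Subgroup.center (VeeGroup p q)) := Nat.finite_of_card_ne_zero (by omega)
  have hββ : pseudoScalar p q * pseudoScalar p q = -1 := by
    rw [pseudoScalar_mul_self, if_neg (by omega)]
  obtain ⟨z, hz⟩ : pseudoScalar p q ∈ Set.range (centerVal p q) := by
    simp [range_centerVal_of_odd hn]
  refine isCyclic_of_orderOf_eq_card z (hcard ▸ orderOf_eq_prime_pow (p := 2) (n := 1) ?_ ?_)
  · intro h2
    have := congrArg (centerVal p q) h2
    rw [pow_one, map_pow, hz, pow_two, hββ, map_one] at this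
    exact ne_neg_self_of_ne_zero ℝ one_ne_zero this.symm
  · apply centerVal_injective
    rw [map_pow, hz, map_one, show 2 ^ (1 + 1) = 2 * 2 by rfl, pow_mul,
      pow_two (pseudoScalar p q), hββ]
    norm_num

end VeeGroup

/-- The center of the Salingaros vee group `G_{p,q}` is `{±1} ≅ ℤ₂` if `p - q ≡ 0,2,4,6 (mod 8)`,
`{±1, ±β} ≅ ℤ₂ × ℤ₂` if `p - q ≡ 1,5 (mod 8)`, and `{±1, ±β} ≅ ℤ₄` if `p - q ≡ 3,7 (mod 8)`,
where `β` is the unit pseudoscalar. -/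
theorem center_of_veeGroup (p q : ℕ) :
    ((((p : ℤ) - q) % 8 = 0 ∨ ((p : ℤ) - q) % 8 = 2 ∨
      ((p : ℤ) - q) % 8 = 4 ∨ ((p : ℤ) - q) % 8 = 6 →
      (∀ x : ↥(VeeGroup p q), x ∈ Subgroup.center ↥(VeeGroup p q) ↔
        ((x : (Cl p q)ˣ) : Cl p q) = 1 ∨ ((x : (Cl p q)ˣ) : Cl p q) = -1) ∧
      Nonempty (↥(Subgroup.center ↥(VeeGroup p q)) ≃* Multiplicative (ZMod 2)))) ∧
    ((((p : ℤ) - q) % 8 = 1 ∨ ((p : ℤ) - q) % 8 = 5 →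
      (∀ x : ↥(VeeGroup p q), x ∈ Subgroup.center ↥(VeeGroup p q) ↔
        ((x : (Cl p q)ˣ) : Cl p q) = 1 ∨ ((x : (Cl p q)ˣ) : Cl p q) = -1 ∨
        ((x : (Cl p q)ˣ) : Cl p q) = pseudoScalar p q ∨
        ((x : (Cl p q)ˣ) : Cl p q) = -pseudoScalar p q) ∧
      Nonempty (↥(Subgroup.center ↥(VeeGroup p q)) ≃*
        Multiplicative (ZMod 2 × ZMod 2)))) ∧
    ((((p : ℤ) - q) % 8 = 3 ∨ ((p : ℤ) - q) % 8 = 7 →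
      (∀ x : ↥(VeeGroup p q), x ∈ Subgroup.center ↥(VeeGroup p q) ↔
        ((x : (Cl p q)ˣ) : Cl p q) = 1 ∨ ((x : (Cl p q)ˣ) : Cl p q) = -1 ∨
        ((x : (Cl p q)ˣ) : Cl p q) = pseudoScalar p q ∨
        ((x : (Cl p q)ˣ) : Cl p q) = -pseudoScalar p q) ∧
      Nonempty (↥(Subgroup.center ↥(VeeGroup p q)) ≃* Multiplicative (ZMod 4)))) := by
  refine ⟨fun h => ?_, fun h => ?_, fun h => ?_⟩
  · have hn : Even (p + q) := Nat.even_iff.mpr (by omega)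
    exact ⟨fun x => by simp [VeeGroup.mem_center_iff, ← Nat.not_even_iff_odd, hn],
      ⟨mulEquivOfPrimeCardEq (VeeGroup.card_center_of_even hn) (by simp)⟩⟩
  · have hn : Odd (p + q) := Nat.odd_iff.mpr (by omega)
    have := VeeGroup.isKleinFour_center (p := p) (q := q) (by omega)
    exact ⟨fun x => by simp [VeeGroup.mem_center_iff, hn], IsKleinFour.nonempty_mulEquiv⟩
  · have hn : Odd (p + q) := Nat.odd_iff.mpr (by omega)
    have := VeeGroup.isCyclic_center (p := p) (q := q) (by omega)
    exact ⟨fun x => by simp [VeeGroup.mem_center_iff, hn],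
      ⟨mulEquivOfCyclicCardEq (by simp [VeeGroup.card_center_of_odd hn])⟩⟩

end
end

section
/- The central products D_8 ∘ D_8 and D_8 ∘ Q_8 are NOT isomorphic groups (both have order 32). -/
noncomputable section

/-- The subgroup generated by a central element is normal. -/
theorem zpowers_normal_of_mem_center {G : Type*} [Group G] {z : G}
    (hz : z ∈ Subgroup.center G) : (Subgroup.zpowers z).Normal := by
  constructor
  intro n hn g
  have hcen : n ∈ Subgroup.center G := by
    obtain ⟨k, rfl⟩ := Subgroup.mem_zpowers_iff.mp hn
    exact Subgroup.zpow_mem _ hz k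
  have : g * n * g⁻¹ = n := by
    rw [Subgroup.mem_center_iff.mp hcen g, mul_assoc, mul_inv_cancel, mul_one]
  rwa [this]

/-- The (unique) central element of order two of the dihedral group `D₈`. -/
def zD : DihedralGroup 4 := DihedralGroup.r 2

/-- The (unique) central element of order two of the quaternion group `Q₈`. -/
def zQ : QuaternionGroup 2 := QuaternionGroup.a 2

theorem zD_mem_center : zD ∈ Subgroup.center (DihedralGroup 4) := by
  rw [Subgroup.mem_center_iff]; decide

theorem zQ_mem_center : zQ ∈ Subgroup.center (QuaternionGroup 2) := by
  rw [Subgroup.mem_center_iff]; decide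

/-- The central subgroup `⟨(z_H, z_K)⟩` of `H × K` along which the central product is formed. -/
def cpKer {H K : Type*} [Group H] [Group K] (zH : H) (zK : K) : Subgroup (H × K) :=
  Subgroup.zpowers (zH, zK)

theorem cpKer_normal {H K : Type*} [Group H] [Group K] {zH : H} {zK : K}
    (hH : zH ∈ Subgroup.center H) (hK : zK ∈ Subgroup.center K) : (cpKer zH zK).Normal :=
  zpowers_normal_of_mem_center (by
    rw [Subgroup.mem_center_iff] at *
    intro g
    exact Prod.ext (hH g.1) (hK g.2))

instance : (cpKer zD zD).Normal := cpKer_normal zD_mem_center zD_mem_center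
instance : (cpKer zQ zQ).Normal := cpKer_normal zQ_mem_center zQ_mem_center
instance : (cpKer zD zQ).Normal := cpKer_normal zD_mem_center zQ_mem_center
instance : (cpKer zQ zD).Normal := cpKer_normal zQ_mem_center zD_mem_center

/-- The central product `D₈ ∘ D₈`. -/
def CPDD : Type := (DihedralGroup 4 × DihedralGroup 4) ⧸ cpKer zD zD

/-- The central product `Q₈ ∘ Q₈`. -/
def CPQQ : Type := (QuaternionGroup 2 × QuaternionGroup 2) ⧸ cpKer zQ zQ

/-- The central product `D₈ ∘ Q₈`. -/
def CPDQ : Type := (DihedralGroup 4 × QuaternionGroup 2) ⧸ cpKer zD zQ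

/-- The central product `Q₈ ∘ D₈`. -/
def CPQD : Type := (QuaternionGroup 2 × DihedralGroup 4) ⧸ cpKer zQ zD

instance : Group CPDD := QuotientGroup.Quotient.group _
instance : Group CPQQ := QuotientGroup.Quotient.group _
instance : Group CPDQ := QuotientGroup.Quotient.group _
instance : Group CPQD := QuotientGroup.Quotient.group _


theorem mem_zpowers_of_sq {G : Type*} [Group G] {z : G} (h : z * z = 1) (x : G) :
    x ∈ Subgroup.zpowers z ↔ x = 1 ∨ x = z := by
  constructor
  · rintro ⟨k, hk⟩
    rw [← hk]
    have hn : ∀ n : ℕ, z ^ n = 1 ∨ z ^ n = z := by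
      intro n
      induction n with
      | zero => left; exact pow_zero z
      | succ n ih =>
        rcases ih with h1 | h1
        · right; rw [pow_succ, h1, one_mul]
        · left; rw [pow_succ, h1, h]
    have hinv : z⁻¹ = z := inv_eq_of_mul_eq_one_right h
    rcases k with n | n
    · simpa using hn n
    · show (z ^ Int.negSucc n = 1) ∨ (z ^ Int.negSucc n = z)
      rw [zpow_negSucc]
      rcases hn (n+1) with h1 | h1
      · left; rw [h1, inv_one]
      · right; rw [h1, hinv]
  · rintro (rfl | rfl)
    · exact Subgroup.one_mem _
    · exact Subgroup.mem_zpowers _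

instance : DecidablePred (· ∈ cpKer zD zD) := fun x =>
  decidable_of_iff _ (mem_zpowers_of_sq (by decide) x).symm
instance : DecidablePred (· ∈ cpKer zD zQ) := fun x =>
  decidable_of_iff _ (mem_zpowers_of_sq (by decide) x).symm

/-- A kernel-reduction-friendly decidable equality on a quotient group. -/
def decEqQuotient {G : Type*} [Group G] (s : Subgroup G) [DecidablePred (· ∈ s)] :
    DecidableEq (G ⧸ s) := fun x y =>
  Quotient.recOnSubsingleton₂ x y fun a b =>
    decidable_of_iff (a⁻¹ * b ∈ s) (QuotientGroup.eq (s := s)).symm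

instance : DecidableEq CPDD := decEqQuotient (cpKer zD zD)
instance : DecidableEq CPDQ := decEqQuotient (cpKer zD zQ)

instance : Fintype CPDD :=
  Fintype.ofSurjective (QuotientGroup.mk : _ → CPDD) fun q => ⟨q.out, q.out_eq⟩
instance : Fintype CPDQ :=
  Fintype.ofSurjective (QuotientGroup.mk : _ → CPDQ) fun q => ⟨q.out, q.out_eq⟩

/-- The central products `D₈ ∘ D₈` and `D₈ ∘ Q₈` are not isomorphic groups. -/
theorem centralProduct_DD_not_iso_DQ : IsEmpty (CPDD ≃* CPDQ) := by
  constructor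
  intro e
  have hcard : Fintype.card {x : CPDD // x * x = 1} =
      Fintype.card {x : CPDQ // x * x = 1} := by
    refine Fintype.card_congr (Equiv.subtypeEquiv e.toEquiv fun x => ?_)
    constructor
    · intro hx
      show e x * e x = 1
      rw [← map_mul, hx, map_one]
    · intro hx
      have h2 : e (x * x) = e 1 := by rw [map_mul, map_one]; exact hx

      exact e.injective h2
  have h1 : Fintype.card {x : CPDD // x * x = 1} = 20 := by decide
  have h2 : Fintype.card {x : CPDQ // x * x = 1} = 12 := by decide
  omega

end
end
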